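/- Let n ≥ 1, let μ = (-1)^n, and let Δ_n be the n×n complex matrix with (i,j) entry μ^i·(−μ)^{j−1}·C(j−1, n−i) for 1 ≤ i, j ≤ n. Then Δ_n is invertible and Δ_n⁻¹ · Δ_nᵀ = −J_n(μ)^n. -/

import Mathlib

open Matrix BigOperators Finset

noncomputable section

/-- The `n × n` upper-triangular Jordan block with eigenvalue `μ`:
`μ` on the diagonal, `1` on the first superdiagonal, `0` elsewhere. -/
def Jmat (n : ℕ) (μ : ℂ) : Matrix (Fin n) (Fin n) ℂ :=
  Matrix.of fun i j => if i = j then μ else if (j : ℕ) = (i : ℕ) + 1 then 1 else 0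

/-- The Pascal-type matrix `Δ_n`, whose 1-based `(i,j)` entry is
`μ^i * (−μ)^(j−1) * C(j−1, n−i)` (here indices are 0-based, so shifted by one). -/
def Delta (n : ℕ) (μ : ℂ) : Matrix (Fin n) (Fin n) ℂ :=
  Matrix.of fun i j =>
    μ ^ ((i : ℕ) + 1) * (-μ) ^ (j : ℕ) * ((j : ℕ).choose (n - ((i : ℕ) + 1)) : ℂ)

/-- The `2n × 2n` block matrix `H_{2n}(μ) = [[0, I],[J_n(μ), 0]]`. -/
def Hmat (n : ℕ) (μ : ℂ) : Matrix (Fin n ⊕ Fin n) (Fin n ⊕ Fin n) ℂ :=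
  Matrix.fromBlocks 0 1 (Jmat n μ) 0

/-- The `n × n` reversed identity matrix: `1` on the antidiagonal, `0` elsewhere. -/
def Rev (n : ℕ) : Matrix (Fin n) (Fin n) ℂ :=
  Matrix.of fun i j => if j = i.rev then 1 else 0

/-! Write `J = μ + N` with `N` the nilpotent shift, so that
`(J ^ n) k j = C(n, j - k) μ^(n - (j - k))`.
Since `μ² = 1`, the `(i, j)` entry of `Δ J^n` is, up to a power of `μ`, the sum
`∑ₖ (-1)^k C(k, m) C(n, j - k)` with `m = n - 1 - i`: the coefficient of `X^j` in
`G_m (1 + X)^n`, where `G_m = ∑ₖ (-1)^k C(k, m) X^k = (-X)^m / (1 + X)^(m+1)`. Hence it equals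
`(-1)^m C(n - 1 - m, j - m)`, and for `μ = (-1)^n` the signs combine to give `Δ J^n = -Δᵀ`.
Reversing the rows of `Δ` gives an upper triangular matrix with diagonal entries
`μ^(n-k) (-μ)^k ≠ 0`, so `Δ` is invertible. -/

namespace PowerSeries

theorem coeff_one_add_X_pow (R : Type*) [Semiring R] (n k : ℕ) :
    coeff k ((1 + X : R⟦X⟧) ^ n) = n.choose k := by
  have : (1 + X : R⟦X⟧) ^ n = ((1 + Polynomial.X : Polynomial R) ^ n : Polynomial R) := by simp
  rw [this, Polynomial.coeff_coe, Polynomial.coeff_one_add_X_pow]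

variable (R : Type*) [CommRing R]

theorem mk_neg_one_pow_mul_choose_eq (m : ℕ) :
    (mk fun k => (-1 : R) ^ k * k.choose m) =
      (-X) ^ m * rescale (-1) (mk fun a => ((m + a).choose m : R)) := by
  ext k
  rw [neg_pow, ← map_one (C (R := R)), ← map_neg, ← map_pow, mul_assoc, coeff_C_mul,
    coeff_X_pow_mul', coeff_rescale, coeff_mk, coeff_mk]
  split_ifs with hmk
  · obtain ⟨a, rfl⟩ := Nat.exists_eq_add_of_le hmk
    rw [Nat.add_sub_cancel_left, pow_add]
    ring
  · simp [Nat.choose_eq_zero_of_lt (not_le.mp hmk)]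

theorem mk_neg_one_pow_mul_choose_mul_one_add_X_pow (m : ℕ) :
    (mk fun k => (-1 : R) ^ k * k.choose m) * (1 + X) ^ (m + 1) = (-X) ^ m := by
  have h : rescale (-1 : R) (1 - X) = 1 + X := by simp [rescale_X]
  rw [mk_neg_one_pow_mul_choose_eq, mul_assoc, ← h, ← map_pow, ← map_mul,
    mk_add_choose_mul_one_sub_pow_eq_one, map_one, mul_one]

end PowerSeries

open PowerSeries in
theorem sum_range_neg_one_pow_mul_choose_mul_choose {R : Type*} [CommRing R] {m n : ℕ}
    (hmn : m < n) (j : ℕ) :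
    ∑ k ∈ range (j + 1), (-1 : R) ^ k * k.choose m * n.choose (j - k) =
      if m ≤ j then (-1) ^ m * ((n - m - 1).choose (j - m) : R) else 0 := by
  have h : (mk fun k => (-1 : R) ^ k * k.choose m) * (1 + X) ^ n =
      C ((-1) ^ m) * (X ^ m * (1 + X) ^ (n - m - 1)) := by
    rw [show n = m + 1 + (n - m - 1) by omega, pow_add, ← mul_assoc,
      mk_neg_one_pow_mul_choose_mul_one_add_X_pow, neg_pow, map_pow, map_neg, map_one, mul_assoc,
      show m + 1 + (n - m - 1) - m - 1 = n - m - 1 by omega]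
  have := congrArg (coeff j) h
  rw [coeff_mul, Nat.sum_antidiagonal_eq_sum_range_succ_mk, coeff_C_mul, coeff_X_pow_mul'] at this
  simpa only [coeff_mk, coeff_one_add_X_pow, mul_ite, mul_zero] using this

def shiftMat (R : Type*) [Zero R] [One R] (n : ℕ) : Matrix (Fin n) (Fin n) R :=
  of fun i j => if (j : ℕ) = i + 1 then 1 else 0

theorem shiftMat_pow_apply {R : Type*} [Semiring R] (n t : ℕ) (i j : Fin n) :
    (shiftMat R n ^ t) i j = if (j : ℕ) = i + t then 1 else 0 := by
  induction t generalizing j with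
  | zero => simp [one_apply, Fin.ext_iff, eq_comm]
  | succ t ih =>
    rw [pow_succ, mul_apply]
    simp only [ih]
    simp only [shiftMat, of_apply, ite_mul, one_mul, zero_mul]
    rw [Fin.sum_univ_eq_sum_range (fun k => if k = (i : ℕ) + t then
      (if (j : ℕ) = k + 1 then (1 : R) else 0) else 0), sum_ite_eq']
    split_ifs <;> simp_all <;> omega

theorem Jmat_eq_smul_one_add_shiftMat (n : ℕ) (μ : ℂ) :
    Jmat n μ = μ • 1 + shiftMat ℂ n := by
  ext i j
  by_cases h : i = j
  · simp [Jmat, shiftMat, h]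
  · simp [Jmat, shiftMat, h, one_apply]

theorem Jmat_pow_apply (n p : ℕ) (μ : ℂ) (i j : Fin n) :
    (Jmat n μ ^ p) i j =
      if (i : ℕ) ≤ j then μ ^ (p - (j - i)) * (p.choose (j - i) : ℂ) else 0 := by
  have hc : Commute (shiftMat ℂ n) (μ • 1) := (Commute.one_right _).smul_right μ
  rw [Jmat_eq_smul_one_add_shiftMat, add_comm, hc.add_pow, Matrix.sum_apply]
  have hterm : ∀ k, (shiftMat ℂ n ^ k * (μ • 1) ^ (p - k) *
      (p.choose k : Matrix (Fin n) (Fin n) ℂ)) i j =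
        if (j : ℕ) = i + k then μ ^ (p - k) * (p.choose k : ℂ) else 0 := by
    intro k
    rw [smul_pow, one_pow, mul_smul_comm, mul_one, smul_mul_assoc, ← nsmul_eq_mul',
      Matrix.smul_apply, Matrix.smul_apply, shiftMat_pow_apply]
    simp
  simp only [hterm]
  by_cases hij : (i : ℕ) ≤ j
  · simp_rw [show ∀ k, ((j : ℕ) = i + k ↔ j - i = k) by omega]
    rw [sum_ite_eq, if_pos hij]
    split_ifs with h
    · rfl
    · rw [mem_range, not_lt] at h
      rw [Nat.choose_eq_zero_of_lt (by omega), Nat.cast_zero, mul_zero]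
  · rw [if_neg hij]
    exact sum_eq_zero fun k _ => if_neg (by omega)

theorem Delta_mul_Jmat_pow_apply {n : ℕ} {μ : ℂ} (hμ : μ ^ 2 = 1) (i j : Fin n) :
    (Delta n μ * Jmat n μ ^ n) i j = μ ^ ((i : ℕ) + 1 + (n - j)) *
      ∑ k ∈ range (j + 1), (-1 : ℂ) ^ k * k.choose (n - (i + 1)) * n.choose (j - k) := by
  have hterm : ∀ k : Fin n, Delta n μ i k * (Jmat n μ ^ n) k j =
      if (k : ℕ) ≤ j then μ ^ ((i : ℕ) + 1 + (n - j)) *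
        ((-1 : ℂ) ^ (k : ℕ) * (k : ℕ).choose (n - (i + 1)) * n.choose (j - k)) else 0 := by
    intro k
    rw [Delta, of_apply, Jmat_pow_apply]
    split_ifs with hkj
    · have hμk : μ ^ (k : ℕ) * μ ^ (k : ℕ) = 1 := by rw [← mul_pow, ← sq, hμ, one_pow]
      rw [show n - (j - k) = n - j + k by omega, neg_pow, pow_add, pow_add]
      linear_combination μ ^ ((i : ℕ) + 1) * μ ^ (n - j) * (-1) ^ (k : ℕ) *
        (k : ℕ).choose (n - (i + 1)) * n.choose (j - k) * hμk
    · rw [mul_zero]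
  rw [mul_apply, sum_congr rfl fun k _ => hterm k, Fin.sum_univ_eq_sum_range (fun k =>
    if k ≤ j then μ ^ ((i : ℕ) + 1 + (n - j)) *
      ((-1 : ℂ) ^ k * k.choose (n - (i + 1)) * n.choose (j - k)) else 0), ← sum_filter, mul_sum]
  congr 1
  ext k
  simp only [mem_filter, mem_range]
  omega

theorem Delta_mul_Jmat_pow {n : ℕ} {μ : ℂ} (hμ : μ = (-1) ^ n) :
    Delta n μ * Jmat n μ ^ n = -(Delta n μ)ᵀ := by
  have hμ2 : μ ^ 2 = 1 := by rw [hμ, ← pow_mul, mul_comm, pow_mul, neg_one_sq, one_pow]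
  ext i j
  have hsign : μ ^ ((i : ℕ) + 1 + (n - j)) * (-1) ^ (n - (i + 1)) =
      -(μ ^ ((j : ℕ) + 1) * (-μ) ^ (i : ℕ)) := by
    rw [← neg_one_mul (_ * _)]
    rcases n.even_or_odd with hn | hn
    · rw [hμ, hn.neg_one_pow]
      simp only [one_pow, one_mul, ← pow_succ']
      exact neg_one_pow_congr (by simp only [Nat.even_iff] at hn ⊢; omega)
    · rw [hμ, hn.neg_one_pow]
      simp only [neg_neg, one_pow, mul_one, ← pow_add, ← pow_succ']
      exact neg_one_pow_congr (by simp only [Nat.even_iff, Nat.odd_iff] at hn ⊢; omega)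
  rw [Delta_mul_Jmat_pow_apply hμ2, sum_range_neg_one_pow_mul_choose_mul_choose (by omega)]
  simp only [Matrix.neg_apply, transpose_apply, Delta, of_apply]
  split_ifs with hij
  · rw [show n - (n - (i + 1)) - 1 = i by omega,
      show j - (n - (i + 1)) = i - (n - (j + 1)) by omega, Nat.choose_symm (by omega),
      ← mul_assoc, hsign, neg_mul]
  · rw [Nat.choose_eq_zero_of_lt (by omega), Nat.cast_zero, mul_zero, mul_zero, neg_zero]

theorem Rev_mul_Delta_apply (n : ℕ) (μ : ℂ) (i j : Fin n) :
    (Rev n * Delta n μ) i j = μ ^ (n - i) * (-μ) ^ (j : ℕ) * (j : ℕ).choose i := by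
  simp only [mul_apply, Rev, of_apply, ite_mul, one_mul, zero_mul, sum_ite_eq', mem_univ, if_true,
    Delta, Fin.val_rev]
  rw [show n - (i + 1) + 1 = n - i by omega, show n - (n - i) = i by omega]

theorem det_Delta_ne_zero (n : ℕ) {μ : ℂ} (hμ : μ ≠ 0) : (Delta n μ).det ≠ 0 := by
  have htri : (Rev n * Delta n μ).IsUpperTriangular := fun i j (hji : j < i) => by
    rw [Rev_mul_Delta_apply, Nat.choose_eq_zero_of_lt hji, Nat.cast_zero, mul_zero]
  have hdet : (Rev n * Delta n μ).det ≠ 0 := by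
    rw [det_of_isUpperTriangular htri]
    refine prod_ne_zero_iff.mpr fun i _ => ?_
    rw [Rev_mul_Delta_apply, Nat.choose_self, Nat.cast_one, mul_one]
    exact mul_ne_zero (pow_ne_zero _ hμ) (pow_ne_zero _ (neg_ne_zero.mpr hμ))
  rw [det_mul] at hdet
  exact right_ne_zero_of_mul hdet

theorem stmt_5_general (n : ℕ) (μ : ℂ) (hμ : μ = (-1) ^ n) :
    IsUnit (Delta n μ) ∧ (Delta n μ)⁻¹ * (Delta n μ)ᵀ = -((Jmat n μ) ^ n) := by
  have hdet : IsUnit (Delta n μ).det :=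
    (det_Delta_ne_zero n (by rw [hμ]; exact pow_ne_zero _ (by norm_num))).isUnit
  refine ⟨(isUnit_iff_isUnit_det _).mpr hdet, ?_⟩
  rw [← neg_neg (Delta n μ)ᵀ, ← Delta_mul_Jmat_pow hμ, Matrix.mul_neg, ← Matrix.mul_assoc,
    nonsing_inv_mul _ hdet, one_mul]

/-- `Δ_n` is invertible and `Δ_n⁻¹ · Δ_nᵀ = −J_n(μ)^n` when `μ = (-1)^n`. -/
theorem stmt_5 (n : ℕ) (hn : 1 ≤ n) (μ : ℂ) (hμ : μ = (-1) ^ n) :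
    IsUnit (Delta n μ) ∧ (Delta n μ)⁻¹ * (Delta n μ)ᵀ = -((Jmat n μ) ^ n) :=
  stmt_5_general n μ hμ
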